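/- arXiv:1409.5146 — 3 statements merged into one kernel-verified Lean document; each statement's English description precedes it below -/
import Mathlib

section
/- Let Γ be a connected k-regular graph on n vertices with d+1 distinct eigenvalues λ₀ > λ₁ > ⋯ > λ_d with multiplicities m₀ = 1, m₁, …, m_d, let πᵢ = Π_{j≠i} |λᵢ − λⱼ|, and let p_d be its highest-degree predistance polynomial. Then for every i = 1, …, d, one has (−1)^i p_d(λᵢ) πᵢ mᵢ = p_d(λ₀) π₀. -/
/-!
`p_d` is orthogonal to every polynomial of degree `< d`. Testing it against
`s = ∏_{j ≠ 0, i} (x - λ_j)`, which vanishes at every eigenvalue except `λ₀` and `λᵢ`, leaves two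
terms of the scalar product: `m₀ p_d(λ₀) s(λ₀) + mᵢ p_d(λᵢ) s(λᵢ) = 0`. Multiplying by `λ₀ - λᵢ`
turns `s(λ₀)` into `π₀` and `s(λᵢ)` into `-(-1)^i πᵢ`, the sign coming from the `i` eigenvalues
that exceed `λᵢ`.
-/

open Polynomial Finset
open scoped Classical

namespace SpectralExcessPaper

variable {V : Type*}

/-- `G` is distance-regular: it is connected and, for each `i`, the numbers of neighbors of `u`
at distance `i-1`, `i`, `i+1` from `v` depend only on `i = dist u v`. -/
def IsDistanceRegular [Fintype V] (G : SimpleGraph V) : Prop :=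
  G.Connected ∧ ∀ i : ℕ, ∃ ci ai bi : ℕ, ∀ u v : V, G.dist u v = i →
    ((G.neighborFinset u).filter fun w => G.dist w v = i - 1).card = ci ∧
    ((G.neighborFinset u).filter fun w => G.dist w v = i).card = ai ∧
    ((G.neighborFinset u).filter fun w => G.dist w v = i + 1).card = bi

/-- The adjacency matrix of the distance-`d` graph of `G`. -/
noncomputable def distMatrix [Fintype V] (G : SimpleGraph V) (d : ℕ) : Matrix V V ℝ :=
  Matrix.of fun u v => if u ≠ v ∧ G.dist u v = d then (1 : ℝ) else 0

/-- The distance-`d` graph of `G`: same vertices, adjacent iff at distance exactly `d`. -/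
def distGraph (G : SimpleGraph V) (d : ℕ) : SimpleGraph V where
  Adj u v := u ≠ v ∧ G.dist u v = d
  symm := by
    constructor
    intro u v h
    exact ⟨Ne.symm h.1, by rw [SimpleGraph.dist_comm]; exact h.2⟩
  loopless := by constructor; intro u h; exact h.1 rfl

/-- The average number `k̄_d` of vertices at distance exactly `d` from a vertex. -/
noncomputable def kdAvg [Fintype V] (G : SimpleGraph V) (n d : ℕ) : ℝ :=
  (1 / (n : ℝ)) * ∑ u : V, (((univ : Finset V).filter fun v => G.dist u v = d).card : ℝ)

/-- `π_i = ∏_{j ≠ i} |λ_i - λ_j|`. -/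
noncomputable def pim {d : ℕ} (lam : Fin (d + 1) → ℝ) (i : Fin (d + 1)) : ℝ :=
  ∏ j ∈ univ.erase i, |lam i - lam j|

/-- The scalar product `⟨r,s⟩_Γ = (1/n) ∑_i m_i r(λ_i) s(λ_i)`. -/
noncomputable def pip (n : ℕ) {d : ℕ} (m : Fin (d + 1) → ℕ) (lam : Fin (d + 1) → ℝ)
    (r s : Polynomial ℝ) : ℝ :=
  (1 / (n : ℝ)) * ∑ i : Fin (d + 1), (m i : ℝ) * r.eval (lam i) * s.eval (lam i)

/-- Partial sums `q_i = p_0 + ⋯ + p_i` of the predistance polynomials. -/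
noncomputable def qsum {d : ℕ} (p : Fin (d + 1) → Polynomial ℝ) (i : Fin (d + 1)) : Polynomial ℝ :=
  ∑ j ∈ univ.filter (fun j => j ≤ i), p j

section PolynomialSpan

variable {R : Type*} {d : ℕ}

/-- The finite family `p`, continued by `X ^ i` beyond `d`. -/
noncomputable def finSequence [Semiring R] [Nontrivial R] (p : Fin (d + 1) → R[X])
    (hpdeg : ∀ i : Fin (d + 1), (p i).degree = (i : ℕ)) : Polynomial.Sequence R where
  elems' i := if h : i < d + 1 then p ⟨i, h⟩ else X ^ i
  degree_eq' i := by
    split_ifs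
    exacts [hpdeg _, degree_X_pow i]

theorem mem_span_image_Iio_of_degree_lt [Field R] (p : Fin (d + 1) → R[X])
    (hpdeg : ∀ i : Fin (d + 1), (p i).degree = (i : ℕ)) (j : Fin (d + 1)) {s : R[X]}
    (hs : s.degree < (j : ℕ)) : s ∈ Submodule.span R (p '' Set.Iio j) := by
  let S := finSequence p hpdeg
  have hspan := S.span_degreeLT (m := j) fun i _ => (leadingCoeff_ne_zero.mpr (S.ne_zero i)).isUnit
  rw [← mem_degreeLT, ← hspan] at hs
  refine Submodule.span_mono ?_ hs
  rintro _ ⟨i, hi, rfl⟩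
  have hid : i < d + 1 := (Set.mem_Iio.mp hi).trans j.isLt
  exact ⟨⟨i, hid⟩, hi, (dif_pos hid : S i = p ⟨i, hid⟩).symm⟩

end PolynomialSpan

section ScalarProduct

variable (n : ℕ) {d : ℕ} (m : Fin (d + 1) → ℕ) (lam : Fin (d + 1) → ℝ)

noncomputable def pipRight (r : ℝ[X]) : ℝ[X] →ₗ[ℝ] ℝ where
  toFun := pip n m lam r
  map_add' s t := by
    simp only [pip, eval_add, mul_add, sum_add_distrib]
  map_smul' c s := by
    simp only [pip, eval_smul, smul_eq_mul, RingHom.id_apply, mul_sum]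
    exact sum_congr rfl fun _ _ => by ring

theorem pip_eq_zero_of_mem_span {r s : ℝ[X]} {T : Set ℝ[X]} (hs : s ∈ Submodule.span ℝ T)
    (hT : ∀ t ∈ T, pip n m lam r t = 0) : pip n m lam r s = 0 := by
  have hker : T ⊆ LinearMap.ker (pipRight n m lam r) := fun t ht => LinearMap.mem_ker.mpr (hT t ht)
  exact LinearMap.mem_ker.mp (Submodule.span_le.mpr hker hs)

theorem pip_eq_zero_of_degree_lt {p : Fin (d + 1) → ℝ[X]}
    (hpdeg : ∀ i : Fin (d + 1), (p i).degree = (i : ℕ))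
    (hporth : ∀ i j : Fin (d + 1), i ≠ j → pip n m lam (p i) (p j) = 0)
    (j : Fin (d + 1)) {s : ℝ[X]} (hs : s.degree < (j : ℕ)) : pip n m lam (p j) s = 0 :=
  pip_eq_zero_of_mem_span n m lam (mem_span_image_Iio_of_degree_lt p hpdeg j hs) <| by
    rintro _ ⟨i, hi, rfl⟩
    exact hporth j i (ne_of_gt hi)

theorem pip_eq_zero_iff (hn : n ≠ 0) {r s : ℝ[X]} :
    pip n m lam r s = 0 ↔ ∑ i, (m i : ℝ) * r.eval (lam i) * s.eval (lam i) = 0 := by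
  simp [pip, hn]

end ScalarProduct

section NodeProducts

variable {d : ℕ}

theorem mul_eval_mul_prod_erase_sub_eq {R : Type*} [CommRing R] (w lam : Fin (d + 1) → R)
    (f : R[X])
    (horth : ∀ s : R[X], s.degree < d → ∑ j, w j * f.eval (lam j) * s.eval (lam j) = 0)
    (a b : Fin (d + 1)) :
    w a * f.eval (lam a) * ∏ j ∈ univ.erase a, (lam a - lam j) =
      w b * f.eval (lam b) * ∏ j ∈ univ.erase b, (lam b - lam j) := by
  rcases eq_or_ne a b with rfl | hab
  · rfl
  -- test `f` against the polynomial vanishing at every node except `a` and `b`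
  set s : R[X] := ∏ j ∈ (univ.erase a).erase b, (X - C (lam j))
  have hs_eval (x : R) : s.eval x = ∏ j ∈ (univ.erase a).erase b, (x - lam j) := by
    simp [s, eval_prod]
  have hs_deg : s.degree < d := by
    have hcard : ((univ.erase a).erase b).card < d := by
      rw [card_erase_of_mem (mem_erase.mpr ⟨hab.symm, mem_univ b⟩),
        card_erase_of_mem (mem_univ a), card_univ, Fintype.card_fin]
      have : 0 < d := by have := Fin.val_ne_iff.mpr hab; omega
      omega
    refine degree_le_natDegree.trans_lt (WithBot.coe_lt_coe.mpr ?_)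
    refine (natDegree_prod_le _ _).trans_lt ((sum_le_card_nsmul _ _ 1 ?_).trans_lt ?_)
    · exact fun j _ => natDegree_X_sub_C_le _
    · simpa using hcard
  have hsum := horth s hs_deg
  rw [Fintype.sum_eq_add a b hab fun c hc => by
    rw [hs_eval, prod_eq_zero (mem_erase.mpr ⟨hc.2, mem_erase.mpr ⟨hc.1, mem_univ c⟩⟩) (sub_self _),
      mul_zero]] at hsum
  rw [← mul_prod_erase _ _ (mem_erase.mpr ⟨hab.symm, mem_univ b⟩),
    ← mul_prod_erase _ _ (mem_erase.mpr ⟨hab, mem_univ a⟩), erase_right_comm (s := univ) (a := b),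
    ← hs_eval, ← hs_eval]
  linear_combination (lam a - lam b) * hsum

theorem prod_erase_sub_eq_neg_one_pow_mul_pim {lam : Fin (d + 1) → ℝ} (hlam : StrictAnti lam)
    (i : Fin (d + 1)) :
    ∏ j ∈ univ.erase i, (lam i - lam j) = (-1) ^ (i : ℕ) * pim lam i := by
  have hsign : ∀ j ∈ univ.erase i,
      lam i - lam j = (if j < i then (-1 : ℝ) else 1) * |lam i - lam j| := by
    intro j hj
    rcases lt_or_gt_of_ne (mem_erase.mp hj).1 with h | h
    · rw [if_pos h, abs_of_neg (sub_neg.mpr (hlam h))]; ring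
    · rw [if_neg (not_lt.mpr h.le), abs_of_pos (sub_pos.mpr (hlam h))]; ring
  have hIio : (univ.erase i).filter (· < i) = Iio i := by
    ext j
    simpa using fun h : j < i => h.ne
  rw [prod_congr rfl hsign, prod_mul_distrib, pim, prod_ite, prod_const, prod_const, hIio,
    Fin.card_Iio, one_pow, mul_one]

end NodeProducts

theorem stmt9_general
    {V : Type*} [Fintype V] (G : SimpleGraph V) (n d : ℕ)
    (hn : Fintype.card V = n) (hconn : G.Connected)
    (lam : Fin (d + 1) → ℝ) (m : Fin (d + 1) → ℕ)
    (hlam : StrictAnti lam)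
    (hm0 : m 0 = 1)
    (p : Fin (d + 1) → Polynomial ℝ)
    (hpdeg : ∀ i : Fin (d + 1), (p i).degree = (i : ℕ))
    (hporth : ∀ i j : Fin (d + 1), i ≠ j → pip n m lam (p i) (p j) = 0) :
    ∀ i : Fin (d + 1), i ≠ 0 →
      (-1 : ℝ) ^ (i : ℕ) * (p (Fin.last d)).eval (lam i) * pim lam i * (m i : ℝ) =
        (p (Fin.last d)).eval (lam 0) * pim lam 0 := by
  intro i _
  have hn0 : n ≠ 0 := hn ▸ (have := hconn.nonempty; Fintype.card_ne_zero)
  have horth (s : ℝ[X]) (hs : s.degree < d) :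
      ∑ j, (m j : ℝ) * (p (Fin.last d)).eval (lam j) * s.eval (lam j) = 0 :=
    (pip_eq_zero_iff n m lam hn0).mp
      (pip_eq_zero_of_degree_lt n m lam hpdeg hporth (Fin.last d) (by simpa using hs))
  have key := mul_eval_mul_prod_erase_sub_eq _ lam _ horth i 0
  rw [prod_erase_sub_eq_neg_one_pow_mul_pim hlam, prod_erase_sub_eq_neg_one_pow_mul_pim hlam,
    hm0, Fin.val_zero, pow_zero] at key
  linear_combination key

/-- the multiplicity formula (−1)^i p_d(λᵢ) πᵢ mᵢ = p_d(λ₀) π₀ for i = 1,…,d. -/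
theorem stmt9
    {V : Type*} [Fintype V] [DecidableEq V] (G : SimpleGraph V) (n d k : ℕ)
    (hn : Fintype.card V = n) (hconn : G.Connected) (hreg : G.IsRegularOfDegree k)
    (lam : Fin (d + 1) → ℝ) (m : Fin (d + 1) → ℕ)
    (hlam : StrictAnti lam) (hlamk : lam 0 = (k : ℝ))
    (hm0 : m 0 = 1) (hmpos : ∀ i, 0 < m i)
    (hcp : (G.adjMatrix ℝ).charpoly = ∏ i : Fin (d + 1), (X - C (lam i)) ^ m i)
    (p : Fin (d + 1) → Polynomial ℝ)
    (hpdeg : ∀ i : Fin (d + 1), (p i).degree = (i : ℕ))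
    (hporth : ∀ i j : Fin (d + 1), i ≠ j → pip n m lam (p i) (p j) = 0)
    (hpnorm : ∀ i : Fin (d + 1), pip n m lam (p i) (p i) = (p i).eval (lam 0)) :
    ∀ i : Fin (d + 1), i ≠ 0 →
      (-1 : ℝ) ^ (i : ℕ) * (p (Fin.last d)).eval (lam i) * pim lam i * (m i : ℝ) =
        (p (Fin.last d)).eval (lam 0) * pim lam 0 :=
  stmt9_general G n d hn hconn lam m hlam hm0 p hpdeg hporth
end SpectralExcessPaper
end

section
/- Let Γ be a connected k-regular graph on n vertices with d+1 distinct eigenvalues λ₀ > λ₁ > ⋯ > λ_d with multiplicities m₀ = 1, m₁, …, m_d, let πᵢ = Π_{j≠i} |λᵢ − λⱼ|, and let p_d be its highest-degree predistance polynomial. Then p_d(λ₀) = n·(Σ_{i=0}^{d} π₀²/(mᵢπᵢ²))^{-1}. -/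
open Polynomial Finset
open scoped Classical

namespace SpectralExcessPaper

variable {V : Type*}

/-!
The top predistance polynomial `r = p_d` is orthogonal to every polynomial of degree `< d`.
Testing it against the nodal polynomial `∏_{t ≠ i, j} (X - λ_t)` leaves only the terms at `λ_i`
and `λ_j`, which shows that `m_i r(λ_i) ∏_{t ≠ i} (λ_i - λ_t)` is a constant `c`, nonzero because
`r ≠ 0` has degree `d` and there are `d + 1` nodes. Substituting
`r(λ_i) = c / (m_i ∏_{t ≠ i} (λ_i - λ_t))` into the normalization `‖r‖² = r(λ₀)` determines `c`,
and with it `r(λ₀)`.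
-/

section WeightedEvaluation

variable {K : Type*} [Field K] {ι : Type*} [Fintype ι]

lemma degreeLT_le_span_of_degree_eq {d : ℕ} (p : Fin (d + 1) → K[X])
    (hp : ∀ i, (p i).degree = (i : ℕ)) :
    degreeLT K d ≤ Submodule.span K (p '' {i | (i : ℕ) < d}) := by
  let S : Sequence K :=
    ⟨fun i => if h : i < d + 1 then p ⟨i, h⟩ else X ^ i, fun i => by split_ifs <;> simp [hp]⟩
  rw [← S.span_degreeLT fun i _ => (leadingCoeff_ne_zero.2 (S.ne_zero i)).isUnit]
  refine Submodule.span_mono ?_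
  rintro _ ⟨i, hi : i < d, rfl⟩
  exact ⟨⟨i, by omega⟩, hi, by simp [S, show i < d + 1 by omega]⟩

lemma sum_mul_eval_eq_zero_of_mem_degreeLT {x v : ι → K} {d : ℕ} (p : Fin (d + 1) → K[X])
    (hp : ∀ i, (p i).degree = (i : ℕ))
    (hpv : ∀ j : Fin (d + 1), (j : ℕ) < d → ∑ l, v l * (p j).eval (x l) = 0)
    {q : K[X]} (hq : q ∈ degreeLT K d) : ∑ l, v l * q.eval (x l) = 0 := by
  replace hq := degreeLT_le_span_of_degree_eq p hp hq
  induction hq using Submodule.span_induction with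
  | mem _ h => obtain ⟨j, hj, rfl⟩ := h; exact hpv j hj
  | zero => simp
  | add _ _ _ _ h₁ h₂ => simp [mul_add, sum_add_distrib, h₁, h₂]
  | smul c _ _ h => simp [mul_left_comm _ c, ← mul_sum, h]

variable [DecidableEq ι]

lemma mul_prod_sub_eq_of_sum_mul_eval_eq_zero {x v : ι → K}
    (hv : ∀ q ∈ degreeLT K (Fintype.card ι - 1), ∑ l, v l * q.eval (x l) = 0) (i j : ι) :
    v i * ∏ t ∈ univ.erase i, (x i - x t) = v j * ∏ t ∈ univ.erase j, (x j - x t) := by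
  rcases eq_or_ne i j with rfl | hij
  · rfl
  have hj : j ∈ univ.erase i := mem_erase.2 ⟨hij.symm, mem_univ j⟩
  have hi : i ∈ univ.erase j := mem_erase.2 ⟨hij, mem_univ i⟩
  set q := Lagrange.nodal ((univ.erase i).erase j) x
  have hq : q ∈ degreeLT K (Fintype.card ι - 1) := by
    have : 1 < Fintype.card ι := Fintype.one_lt_card_iff.2 ⟨i, j, hij⟩
    rw [mem_degreeLT, Lagrange.degree_nodal, card_erase_of_mem hj, card_erase_of_mem (mem_univ i),
      card_univ, Nat.cast_lt]
    omega
  have hsum : v i * q.eval (x i) + v j * q.eval (x j) = 0 := by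
    rw [← hv q hq, Fintype.sum_eq_add i j hij fun l hl => ?_]
    rw [Lagrange.eval_nodal_at_node (by simp [hl.1, hl.2]), mul_zero]
  have hPi : ∏ t ∈ univ.erase i, (x i - x t) = (x i - x j) * q.eval (x i) := by
    rw [Lagrange.eval_nodal, mul_prod_erase _ (fun t => x i - x t) hj]
  have hPj : ∏ t ∈ univ.erase j, (x j - x t) = (x j - x i) * q.eval (x j) := by
    rw [Lagrange.eval_nodal, erase_right_comm, mul_prod_erase _ (fun t => x j - x t) hi]
  rw [hPi, hPj]
  linear_combination (x i - x j) * hsum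

lemma prod_erase_sub_ne_zero {x : ι → K} (hx : Function.Injective x) (i : ι) :
    ∏ t ∈ univ.erase i, (x i - x t) ≠ 0 :=
  prod_ne_zero_iff.2 fun _ ht => sub_ne_zero.2 (hx.ne (ne_of_mem_erase ht).symm)

lemma exists_eval_eq_div_prod_sub_of_sum_mul_eval_eq_zero {x w : ι → K}
    (hx : Function.Injective x) (hw : ∀ i, w i ≠ 0) {r : K[X]} (hr : r ≠ 0)
    (hrdeg : r.natDegree < Fintype.card ι)
    (horth : ∀ q ∈ degreeLT K (Fintype.card ι - 1),
      ∑ l, w l * r.eval (x l) * q.eval (x l) = 0) :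
    ∃ c ≠ 0, ∀ i, r.eval (x i) = c / (w i * ∏ t ∈ univ.erase i, (x i - x t)) := by
  have hP := prod_erase_sub_ne_zero hx
  obtain ⟨i₀⟩ : Nonempty ι := Fintype.card_pos_iff.1 (by omega)
  have hc := fun i => mul_prod_sub_eq_of_sum_mul_eval_eq_zero horth i i₀
  refine ⟨w i₀ * r.eval (x i₀) * ∏ t ∈ univ.erase i₀, (x i₀ - x t), fun h0 => hr ?_, fun i => ?_⟩
  · refine eq_zero_of_natDegree_lt_card_of_eval_eq_zero r hx (fun i => ?_) hrdeg
    simpa [h0, hw i, hP i] using hc i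
  · rw [← hc i]
    field_simp [hw i, hP i]

lemma sum_mul_eval_mul_eval_eq_of_eval_eq_div {x w : ι → K} (hx : Function.Injective x)
    (hw : ∀ i, w i ≠ 0) {r : K[X]} {c : K}
    (hrc : ∀ i, r.eval (x i) = c / (w i * ∏ t ∈ univ.erase i, (x i - x t))) :
    ∑ i, w i * r.eval (x i) * r.eval (x i) =
      c ^ 2 * ∑ i, 1 / (w i * (∏ t ∈ univ.erase i, (x i - x t)) ^ 2) := by
  rw [mul_sum]
  refine sum_congr rfl fun i _ => ?_
  rw [hrc i]
  field_simp [hw i, prod_erase_sub_ne_zero hx i]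

lemma eval_eq_mul_inv_of_sum_mul_eval_mul_eval_eq {x w : ι → K} (hx : Function.Injective x)
    (hw : ∀ i, w i ≠ 0) {r : K[X]} {a c : K} {i₀ : ι} (hw₀ : w i₀ = 1) (ha : a ≠ 0)
    (hc : c ≠ 0) (hrc : ∀ i, r.eval (x i) = c / (w i * ∏ t ∈ univ.erase i, (x i - x t)))
    (hnorm : ∑ i, w i * r.eval (x i) * r.eval (x i) = a * r.eval (x i₀)) :
    r.eval (x i₀) = a * (∑ i, (∏ t ∈ univ.erase i₀, (x i₀ - x t)) ^ 2 /
      (w i * (∏ t ∈ univ.erase i, (x i - x t)) ^ 2))⁻¹ := by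
  set P := fun i => ∏ t ∈ univ.erase i, (x i - x t)
  set S := ∑ i, 1 / (w i * P i ^ 2)
  have hP : ∀ i, P i ≠ 0 := prod_erase_sub_ne_zero hx
  have hr₀ : r.eval (x i₀) = c / P i₀ := by rw [hrc, hw₀, one_mul]
  have hSa : c * P i₀ * S = a := by
    rw [sum_mul_eval_mul_eval_eq_of_eval_eq_div hx hw hrc, hr₀] at hnorm
    field_simp [hc, hP i₀] at hnorm
    linear_combination hnorm
  have hS : S ≠ 0 := by
    rintro hS
    simp [hS, ha.symm] at hSa
  have hsum : ∑ i, P i₀ ^ 2 / (w i * P i ^ 2) = P i₀ ^ 2 * S := by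
    simp only [S, mul_sum, mul_one_div]
  rw [hsum, hr₀, ← hSa]
  field_simp [hP i₀, hS]

end WeightedEvaluation

lemma pim_sq {d : ℕ} (lam : Fin (d + 1) → ℝ) (i : Fin (d + 1)) :
    pim lam i ^ 2 = (∏ j ∈ univ.erase i, (lam i - lam j)) ^ 2 := by
  rw [pim, ← abs_prod, sq_abs]

theorem stmt10_general
    (n d : ℕ)
    (lam : Fin (d + 1) → ℝ) (m : Fin (d + 1) → ℕ)
    (hlam : StrictAnti lam)
    (hm0 : m 0 = 1) (hmpos : ∀ i, 0 < m i)
    (p : Fin (d + 1) → Polynomial ℝ)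
    (hpdeg : ∀ i : Fin (d + 1), (p i).degree = (i : ℕ))
    (hporth : ∀ i j : Fin (d + 1), i ≠ j → pip n m lam (p i) (p j) = 0)
    (hpnorm : ∀ i : Fin (d + 1), pip n m lam (p i) (p i) = (p i).eval (lam 0)) :
    (p (Fin.last d)).eval (lam 0) =
      (n : ℝ) * (∑ i : Fin (d + 1), pim lam 0 ^ 2 / ((m i : ℝ) * pim lam i ^ 2))⁻¹ := by
  -- for `n = 0`, `pip` is identically `0` (as `1 / 0 = 0`), and so are both sides
  rcases eq_or_ne n 0 with rfl | hn
  · simpa [pip] using (hpnorm (Fin.last d)).symm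
  set r := p (Fin.last d)
  have hrdeg : r.degree = d := by simpa using hpdeg (Fin.last d)
  have horth : ∀ q ∈ degreeLT ℝ (Fintype.card (Fin (d + 1)) - 1),
      ∑ i, m i * r.eval (lam i) * q.eval (lam i) = 0 := by
    rw [Fintype.card_fin, Nat.add_sub_cancel]
    refine fun q => sum_mul_eval_eq_zero_of_mem_degreeLT p hpdeg fun j hj => ?_
    simpa [pip, hn] using hporth (Fin.last d) j (Fin.ne_of_gt hj)
  have hm : ∀ i, (m i : ℝ) ≠ 0 := fun i => Nat.cast_ne_zero.2 (hmpos i).ne'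
  obtain ⟨c, hc, hrc⟩ := exists_eval_eq_div_prod_sub_of_sum_mul_eval_eq_zero hlam.injective hm
    (fun h0 => by simp [h0] at hrdeg)
    (by simp [natDegree_eq_of_degree_eq_some hrdeg]) horth
  have hnorm : ∑ i, (m i : ℝ) * r.eval (lam i) * r.eval (lam i) = n * r.eval (lam 0) := by
    rw [← hpnorm, pip, one_div, mul_inv_cancel_left₀ (Nat.cast_ne_zero.2 hn)]
  simp only [pim_sq]
  exact eval_eq_mul_inv_of_sum_mul_eval_mul_eval_eq hlam.injective hm (by simp [hm0])
    (Nat.cast_ne_zero.2 hn) hc hrc hnorm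

/-- the spectral excess p_d(λ₀) = n·(Σᵢ π₀²/(mᵢπᵢ²))⁻¹. -/
theorem stmt10
    {V : Type*} [Fintype V] [DecidableEq V] (G : SimpleGraph V) (n d k : ℕ)
    (hn : Fintype.card V = n) (hconn : G.Connected) (hreg : G.IsRegularOfDegree k)
    (lam : Fin (d + 1) → ℝ) (m : Fin (d + 1) → ℕ)
    (hlam : StrictAnti lam) (hlamk : lam 0 = (k : ℝ))
    (hm0 : m 0 = 1) (hmpos : ∀ i, 0 < m i)
    (hcp : (G.adjMatrix ℝ).charpoly = ∏ i : Fin (d + 1), (X - C (lam i)) ^ m i)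
    (p : Fin (d + 1) → Polynomial ℝ)
    (hpdeg : ∀ i : Fin (d + 1), (p i).degree = (i : ℕ))
    (hporth : ∀ i j : Fin (d + 1), i ≠ j → pip n m lam (p i) (p j) = 0)
    (hpnorm : ∀ i : Fin (d + 1), pip n m lam (p i) (p i) = (p i).eval (lam 0)) :
    (p (Fin.last d)).eval (lam 0) =
      (n : ℝ) * (∑ i : Fin (d + 1), pim lam 0 ^ 2 / ((m i : ℝ) * pim lam i ^ 2))⁻¹ :=
  stmt10_general n d lam m hlam hm0 hmpos p hpdeg hporth hpnorm
end SpectralExcessPaper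
end

section
/- Let Γ be a connected k-regular graph on n vertices with d+1 distinct eigenvalues λ₀ > λ₁ > ⋯ > λ_d and predistance polynomials p₀, p₁, …, p_d, and for each i set qᵢ = p₀ + p₁ + ⋯ + pᵢ. Then for every i = 0, …, d: qᵢ(λ₀)²/‖qᵢ‖²_Γ = qᵢ(λ₀), and for every nonzero real polynomial r of degree at most i, r(λ₀)²/‖r‖²_Γ ≤ qᵢ(λ₀), with equality if and only if r is a nonzero scalar multiple of qᵢ. -/
/-!
For `deg r ≤ i` one has `⟨r, qᵢ⟩ = r(λ₀)`: both sides are linear in `r` and agree on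
`p₀, …, pᵢ`, which span the polynomials of degree `≤ i`, by orthogonality and `‖pⱼ‖² = pⱼ(λ₀)`.
Hence `r(λ₀)² / ‖r‖² = ⟨r, qᵢ⟩² / ‖r‖² ≤ ‖qᵢ‖² = qᵢ(λ₀)` by Cauchy–Schwarz. The scalar product is
positive definite on polynomials of degree `≤ d`, since such a polynomial vanishing at the `d + 1`
distinct eigenvalues is zero, so equality forces `r` to be a multiple of `qᵢ`.
-/

open Polynomial Finset
open scoped Classical

namespace SpectralExcessPaper

variable {V : Type*}

section CauchySchwarz

variable {𝕜 M : Type*} [Field 𝕜] [LinearOrder 𝕜] [IsStrictOrderedRing 𝕜]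
  [AddCommGroup M] [Module 𝕜 M] {B : LinearMap.BilinForm 𝕜 M}

theorem _root_.LinearMap.BilinForm.apply_sq_div_le (hs : ∀ x, 0 ≤ B x x)
    (hB : LinearMap.IsSymm B) (x y : M) : B x y ^ 2 / B x x ≤ B y y :=
  div_le_of_le_mul₀ (hs x) (hs y) (by rw [mul_comm]; exact B.apply_sq_le_of_symm hs hB x y)

theorem _root_.LinearMap.BilinForm.apply_sq_div_eq_iff (hp : ∀ x, x ≠ 0 → 0 < B x x)
    (hB : LinearMap.IsSymm B) {x y : M} (hx : x ≠ 0) (hy : y ≠ 0) :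
    B x y ^ 2 / B x x = B y y ↔ ∃ c : 𝕜, c ≠ 0 ∧ x = c • y := by
  have hle : B y x ^ 2 ≤ B y y * B x x :=
    B.apply_sq_le_of_symm (fun z ↦ (eq_or_ne z 0).elim (fun h ↦ by simp [h]) fun h ↦ (hp z h).le)
      hB y x
  rw [div_eq_iff (hp x hx).ne', ← hB.eq y x, RingHom.id_apply, ← hle.not_lt_iff_eq,
    B.apply_sq_lt_iff_linearIndependent_of_symm hp hB, LinearIndependent.pair_iff' hy]
  push Not
  refine ⟨fun ⟨c, hc⟩ ↦ ⟨c, ?_, hc.symm⟩, fun ⟨c, _, hc⟩ ↦ ⟨c, hc.symm⟩⟩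
  rintro rfl
  exact hx (by simpa using hc.symm)

end CauchySchwarz

section ScalarProduct

variable (n : ℕ) {d : ℕ} (m : Fin (d + 1) → ℕ) (lam : Fin (d + 1) → ℝ)

noncomputable def pipForm : LinearMap.BilinForm ℝ ℝ[X] :=
  LinearMap.mk₂ ℝ (pip n m lam)
    (fun r₁ r₂ s ↦ by simp only [pip, eval_add, mul_add, add_mul, sum_add_distrib])
    (fun c r s ↦ by
      simp only [pip, eval_smul, smul_eq_mul, mul_sum]; exact sum_congr rfl fun _ _ ↦ by ring)
    (fun r s₁ s₂ ↦ by simp only [pip, eval_add, mul_add, sum_add_distrib])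
    (fun c r s ↦ by
      simp only [pip, eval_smul, smul_eq_mul, mul_sum]; exact sum_congr rfl fun _ _ ↦ by ring)

@[simp]
theorem pipForm_apply (r s : ℝ[X]) : pipForm n m lam r s = pip n m lam r s := rfl

theorem pipForm_isSymm : LinearMap.IsSymm (pipForm n m lam) :=
  ⟨fun r s ↦ by simp only [pipForm_apply, RingHom.id_apply, pip, mul_right_comm]⟩

theorem pip_self_nonneg (r : ℝ[X]) : 0 ≤ pip n m lam r r := by
  unfold pip
  exact mul_nonneg (by positivity) (sum_nonneg fun i _ ↦ by
    rw [mul_assoc]; exact mul_nonneg (by positivity) (mul_self_nonneg _))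

variable {n m lam}

theorem pip_self_pos (hn : n ≠ 0) (hm : ∀ i, 0 < m i) (hlam : Function.Injective lam)
    {r : ℝ[X]} (hr : r ≠ 0) (hdeg : r.degree ≤ d) : 0 < pip n m lam r r := by
  obtain ⟨i, hi⟩ : ∃ i, r.eval (lam i) ≠ 0 := by
    by_contra! h
    refine hr (eq_zero_of_degree_lt_of_eval_index_eq_zero (s := univ) hlam.injOn ?_ fun i _ ↦ h i)
    rw [card_univ, Fintype.card_fin]
    exact hdeg.trans_lt (by exact_mod_cast d.lt_succ_self)
  unfold pip
  refine mul_pos (by positivity) (sum_pos' (fun j _ ↦ by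
    rw [mul_assoc]; exact mul_nonneg (by positivity) (mul_self_nonneg _)) ⟨i, mem_univ i, ?_⟩)
  rw [mul_assoc]
  exact mul_pos (by exact_mod_cast hm i) (mul_self_pos.2 hi)

theorem pip_sq_div_le (r s : ℝ[X]) : pip n m lam r s ^ 2 / pip n m lam r r ≤ pip n m lam s s :=
  (pipForm n m lam).apply_sq_div_le (pip_self_nonneg n m lam) (pipForm_isSymm n m lam) r s

theorem pip_sq_div_eq_iff (hn : n ≠ 0) (hm : ∀ i, 0 < m i) (hlam : Function.Injective lam)
    {r s : ℝ[X]} (hr : r ∈ degreeLE ℝ d) (hs : s ∈ degreeLE ℝ d) (hr0 : r ≠ 0) (hs0 : s ≠ 0) :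
    pip n m lam r s ^ 2 / pip n m lam r r = pip n m lam s s ↔ ∃ c : ℝ, c ≠ 0 ∧ r = c • s := by
  have hpos (x : degreeLE ℝ d) (hx : x ≠ 0) : 0 < (pipForm n m lam).restrict _ x x :=
    pip_self_pos hn hm hlam (by simpa using hx) (mem_degreeLE.1 x.2)
  have := ((pipForm n m lam).restrict _).apply_sq_div_eq_iff hpos
    ⟨fun x y ↦ (pipForm_isSymm n m lam).eq x y⟩ (x := ⟨r, hr⟩) (y := ⟨s, hs⟩) (by simpa) (by simpa)
  simpa [Subtype.ext_iff] using this

end ScalarProduct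

section Reproducing

theorem mem_span_image_Iic_of_degree_le {K : Type*} [Field K] {d : ℕ} (p : Fin (d + 1) → K[X])
    (hp : ∀ j, (p j).degree = (j : ℕ)) {i : Fin (d + 1)} {r : K[X]} (hr : r.degree ≤ (i : ℕ)) :
    r ∈ Submodule.span K (p '' Set.Iic i) := by
  let S : Sequence K :=
    { elems' := fun j ↦ if h : j < d + 1 then p ⟨j, h⟩ else X ^ j
      degree_eq' := fun j ↦ by split_ifs with h <;> simp [hp] }
  have hspan := S.span_degreeLE (m := i) fun j _ ↦
    isUnit_iff_ne_zero.2 (leadingCoeff_ne_zero.2 (S.ne_zero j))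
  rw [← mem_degreeLE, ← hspan] at hr
  refine Submodule.span_mono ?_ hr
  rintro _ ⟨j, hj, rfl⟩
  have hjd : j < d + 1 := (Set.mem_Iic.1 hj).trans_lt i.isLt
  exact ⟨⟨j, hjd⟩, Fin.le_iff_val_le_val.2 hj, by simp [S, hjd]⟩

variable {n d : ℕ} {m : Fin (d + 1) → ℕ} {lam : Fin (d + 1) → ℝ} {p : Fin (d + 1) → ℝ[X]}

theorem degree_qsum_le (hp : ∀ j, (p j).degree = (j : ℕ)) (i : Fin (d + 1)) :
    (qsum p i).degree ≤ (i : ℕ) :=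
  (degree_sum_le _ _).trans <| Finset.sup_le fun j hj ↦ by
    rw [hp j]; exact_mod_cast (mem_filter.1 hj).2

theorem pip_qsum_eq_eval (hpdeg : ∀ j, (p j).degree = (j : ℕ))
    (hporth : ∀ i j, i ≠ j → pip n m lam (p i) (p j) = 0)
    (hpnorm : ∀ j, pip n m lam (p j) (p j) = (p j).eval (lam 0))
    {i : Fin (d + 1)} {r : ℝ[X]} (hr : r.degree ≤ (i : ℕ)) :
    pip n m lam r (qsum p i) = r.eval (lam 0) := by
  let ℓ : ℝ[X] →ₗ[ℝ] ℝ := (pipForm n m lam).flip (qsum p i) - leval (lam 0)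
  suffices Submodule.span ℝ (p '' Set.Iic i) ≤ LinearMap.ker ℓ by
    simpa [ℓ, sub_eq_zero] using this (mem_span_image_Iic_of_degree_le p hpdeg hr)
  refine Submodule.span_le.2 ?_
  rintro _ ⟨j, hj, rfl⟩
  have hpq : pip n m lam (p j) (qsum p i) = pip n m lam (p j) (p j) := by
    rw [qsum, ← pipForm_apply, map_sum]
    exact sum_eq_single_of_mem j (by simpa using hj) fun l _ hl ↦ hporth j l hl.symm
  simp [ℓ, hpq, hpnorm]

end Reproducing

theorem stmt13_general
    {V : Type*} [Fintype V] (G : SimpleGraph V) (n d : ℕ)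
    (hn : Fintype.card V = n) (hconn : G.Connected)
    (lam : Fin (d + 1) → ℝ) (m : Fin (d + 1) → ℕ)
    (hlam : StrictAnti lam) (hmpos : ∀ i, 0 < m i)
    (p : Fin (d + 1) → Polynomial ℝ)
    (hpdeg : ∀ i : Fin (d + 1), (p i).degree = (i : ℕ))
    (hporth : ∀ i j : Fin (d + 1), i ≠ j → pip n m lam (p i) (p j) = 0)
    (hpnorm : ∀ i : Fin (d + 1), pip n m lam (p i) (p i) = (p i).eval (lam 0)) :
    ∀ i : Fin (d + 1),
      ((qsum p i).eval (lam 0)) ^ 2 / pip n m lam (qsum p i) (qsum p i) =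
        (qsum p i).eval (lam 0) ∧
      ∀ r : Polynomial ℝ, r ≠ 0 → r.degree ≤ (i : ℕ) →
        (r.eval (lam 0)) ^ 2 / pip n m lam r r ≤ (qsum p i).eval (lam 0) ∧
        ((r.eval (lam 0)) ^ 2 / pip n m lam r r = (qsum p i).eval (lam 0) ↔
          ∃ c : ℝ, c ≠ 0 ∧ r = c • qsum p i) := by
  intro i
  have hn0 : n ≠ 0 := hn ▸ (have := hconn.nonempty; Fintype.card_ne_zero)
  have hW {r : ℝ[X]} (hr : r.degree ≤ (i : ℕ)) : r ∈ degreeLE ℝ d :=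
    mem_degreeLE.2 (hr.trans (by exact_mod_cast i.is_le))
  have hrep {r : ℝ[X]} (hr : r.degree ≤ (i : ℕ)) := pip_qsum_eq_eval hpdeg hporth hpnorm hr
  have hqdeg := degree_qsum_le hpdeg i
  have hqq := hrep hqdeg
  have hq0 : qsum p i ≠ 0 := by
    intro hq
    have hp0 : p 0 ≠ 0 := fun h ↦ by simpa [h] using hpdeg 0
    have h0 := hrep ((hpdeg 0).trans_le (by simp))
    rw [hq, ← hpnorm, ← pipForm_apply, map_zero] at h0
    exact (pip_self_pos hn0 hmpos hlam.injective hp0 (by simp [hpdeg])).ne h0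
  refine ⟨by rw [hqq, sq, mul_self_div_self], fun r hr hri ↦ ?_⟩
  rw [← hrep hri, ← hqq]
  exact ⟨pip_sq_div_le r _,
    pip_sq_div_eq_iff hn0 hmpos hlam.injective (hW hri) (hW hqdeg) hr hq0⟩

/-- each qᵢ = p₀ + ⋯ + pᵢ satisfies qᵢ(λ₀)²/‖qᵢ‖² = qᵢ(λ₀) and maximizes
r(λ₀)²/‖r‖² over nonzero polynomials r of degree ≤ i, with equality iff r is a nonzero
multiple of qᵢ. -/
theorem stmt13
    {V : Type*} [Fintype V] [DecidableEq V] (G : SimpleGraph V) (n d k : ℕ)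
    (hn : Fintype.card V = n) (hconn : G.Connected) (hreg : G.IsRegularOfDegree k)
    (lam : Fin (d + 1) → ℝ) (m : Fin (d + 1) → ℕ)
    (hlam : StrictAnti lam) (hlamk : lam 0 = (k : ℝ))
    (hm0 : m 0 = 1) (hmpos : ∀ i, 0 < m i)
    (hcp : (G.adjMatrix ℝ).charpoly = ∏ i : Fin (d + 1), (X - C (lam i)) ^ m i)
    (p : Fin (d + 1) → Polynomial ℝ)
    (hpdeg : ∀ i : Fin (d + 1), (p i).degree = (i : ℕ))
    (hporth : ∀ i j : Fin (d + 1), i ≠ j → pip n m lam (p i) (p j) = 0)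
    (hpnorm : ∀ i : Fin (d + 1), pip n m lam (p i) (p i) = (p i).eval (lam 0)) :
    ∀ i : Fin (d + 1),
      ((qsum p i).eval (lam 0)) ^ 2 / pip n m lam (qsum p i) (qsum p i) =
        (qsum p i).eval (lam 0) ∧
      ∀ r : Polynomial ℝ, r ≠ 0 → r.degree ≤ (i : ℕ) →
        (r.eval (lam 0)) ^ 2 / pip n m lam r r ≤ (qsum p i).eval (lam 0) ∧
        ((r.eval (lam 0)) ^ 2 / pip n m lam r r = (qsum p i).eval (lam 0) ↔
          ∃ c : ℝ, c ≠ 0 ∧ r = c • qsum p i) :=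
  stmt13_general G n d hn hconn lam m hlam hmpos p hpdeg hporth hpnorm
end SpectralExcessPaper
end
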